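/- Let Δ be a finite ranked signature and yield a projective yield function over Δ with terminal alphabet Σ. For every r ∈ ℕ there exists s ∈ ℕ with s > r such that every term t over Δ with |yield(t)| > 2s has a strict subtree t' with |yield(t')| ≥ 2r. -/
import Mathlib


/-- Terms over a ranked signature `Δ` with arity function `ar`. -/
inductive PTerm (Δ : Type*) (ar : Δ → ℕ) : Type _
  | node (f : Δ) (ts : Fin (ar f) → PTerm Δ ar) : PTerm Δ ar

variable {Δ : Type*} {ar : Δ → ℕ} {σ : Type*}

/-- Yield of a term, given a yield function on symbols: `yield (f(t_1,…,t_k))` is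
`Y f` with each variable `x_i` replaced by the yield of `t_i`. -/
def PTerm.yield (Y : ∀ f : Δ, List (σ ⊕ Fin (ar f))) : PTerm Δ ar → List σ
  | .node f ts => (Y f).flatMap fun s => match s with
      | .inl a => [a]
      | .inr i => (ts i).yield Y

/-- Projectivity: in `Y f`, each variable occurs exactly once, and the variables
occur in the order `x_1, …, x_k` from left to right. -/
def Projective (Y : ∀ f : Δ, List (σ ⊕ Fin (ar f))) : Prop :=
  ∀ f : Δ, (Y f).filterMap Sum.getRight? = List.ofFn (fun i : Fin (ar f) => i)

/-- One-hole contexts over `Δ`: either the hole, or a node whose `i`-th child is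
again a context (the others being terms; the value `ts i` is irrelevant). -/
inductive Ctx (Δ : Type*) (ar : Δ → ℕ) : Type _
  | hole : Ctx Δ ar
  | node (f : Δ) (i : Fin (ar f)) (C : Ctx Δ ar) (ts : Fin (ar f) → PTerm Δ ar) : Ctx Δ ar

/-- `C.subst t` plugs the term `t` into the hole of the context `C`. -/
def Ctx.subst : Ctx Δ ar → PTerm Δ ar → PTerm Δ ar
  | .hole, t => t
  | .node f i C ts, t => .node f fun j => if j = i then C.subst t else ts j

/-- Yield of a context, with `none` marking the hole. -/
def Ctx.cyield (Y : ∀ f : Δ, List (σ ⊕ Fin (ar f))) : Ctx Δ ar → List (Option σ)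
  | .hole => [none]
  | .node f i C ts => (Y f).flatMap fun s => match s with
      | .inl a => [some a]
      | .inr j => if j = i then C.cyield Y else ((ts j).yield Y).map some

/-- The part of the yield of a context to the left of the hole. -/
def Ctx.leftc (Y : ∀ f : Δ, List (σ ⊕ Fin (ar f))) (C : Ctx Δ ar) : List σ :=
  ((C.cyield Y).takeWhile fun o => o.isSome).reduceOption

/-- The part of the yield of a context to the right of the hole. -/
def Ctx.rightc (Y : ∀ f : Δ, List (σ ⊕ Fin (ar f))) (C : Ctx Δ ar) : List σ :=
  (((C.cyield Y).dropWhile fun o => o.isSome).tail).reduceOption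

/-- `yield(C) = leftc(C) · rightc(C)`. -/
def Ctx.yieldc (Y : ∀ f : Δ, List (σ ⊕ Fin (ar f))) (C : Ctx Δ ar) : List σ :=
  C.leftc Y ++ C.rightc Y

/-- Height of a term: 1 plus the maximum height of the children. -/
def PTerm.height : PTerm Δ ar → ℕ
  | .node _ ts => 1 + Finset.univ.sup fun i => (ts i).height

/-- Height of a context, viewed as a term (the hole is a nullary node). -/
def Ctx.height : Ctx Δ ar → ℕ
  | .hole => 1
  | .node _ i C ts =>
      1 + max C.height (Finset.univ.sup fun j => if j = i then 0 else (ts j).height)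

/-- `Subtree s t`: `s` is a subtree of `t` (a term rooted at a node of `t`). -/
inductive Subtree : PTerm Δ ar → PTerm Δ ar → Prop
  | refl (t : PTerm Δ ar) : Subtree t t
  | child {s : PTerm Δ ar} (f : Δ) (ts : Fin (ar f) → PTerm Δ ar) (i : Fin (ar f)) :
      Subtree s (ts i) → Subtree s (.node f ts)

/-- `StrictSubtree s t`: `s` is a subtree of a child of `t`. -/
def StrictSubtree (s t : PTerm Δ ar) : Prop :=
  ∃ (f : Δ) (ts : Fin (ar f) → PTerm Δ ar) (i : Fin (ar f)),
    t = PTerm.node f ts ∧ Subtree s (ts i)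

/-- `t.Pos p`: the list of child indices `p` is (the address of) a node of `t`. -/
inductive PTerm.Pos : PTerm Δ ar → List ℕ → Prop
  | nil (t : PTerm Δ ar) : Pos t []
  | cons (f : Δ) (ts : Fin (ar f) → PTerm Δ ar) (i : Fin (ar f)) {p : List ℕ} :
      Pos (ts i) p → Pos (.node f ts) (i.val :: p)

/-- The address of the hole of a context. -/
def Ctx.holePath : Ctx Δ ar → List ℕ
  | .hole => []
  | .node _ i C _ => i.val :: C.holePath

/-- Sum, over the nodes of a term, of a weight attached to the node labels
(e.g. the number of `z`-labelled edges contributed by each node). -/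
def PTerm.esum (w : Δ → ℕ) : PTerm Δ ar → ℕ
  | .node f ts => w f + Finset.univ.sum fun i => (ts i).esum w

/-- `(D_x, D_0, t_y)` is an `x,y,l`-separation of `t`. -/
def IsSep [DecidableEq σ] (Y : ∀ f : Δ, List (σ ⊕ Fin (ar f))) (x y : σ) (l : ℕ)
    (t : PTerm Δ ar) (Dx D0 : Ctx Δ ar) (ty : PTerm Δ ar) : Prop :=
  t = Dx.subst (D0.subst ty) ∧ (Dx.yieldc Y).count y = 0 ∧
    (D0.yieldc Y).count x ≤ l ∧ (ty.yield Y).count x = 0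

/-- `t` is `x,y,l`-separated. -/
def Separated [DecidableEq σ] (Y : ∀ f : Δ, List (σ ⊕ Fin (ar f))) (x y : σ) (l : ℕ)
    (t : PTerm Δ ar) : Prop :=
  ∃ Dx D0 ty, IsSep Y x y l t Dx D0 ty

/-- The four-letter alphabet `{a, b, c, d}`. -/
inductive ABCD | a | b | c | d
deriving DecidableEq


lemma aux_sum_le {σ : Type*} {n : ℕ} (g : Fin n → ℕ) (L : List (σ ⊕ Fin n)) :
    (L.map (fun s => match s with | .inl _ => 1 | .inr i => g i)).sum
      ≤ L.length + ((L.filterMap Sum.getRight?).map g).sum := by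
  induction L with
  | nil => simp
  | cons hd tl ih =>
    cases hd with
    | inl a =>
      simp only [List.map_cons, List.sum_cons, List.length_cons,
        List.filterMap_cons, Sum.getRight?]
      omega
    | inr i =>
      simp only [List.map_cons, List.sum_cons, List.length_cons,
        List.filterMap_cons, Sum.getRight?, List.map_cons, List.sum_cons]
      omega

lemma yield_len_le {Δ : Type*} {ar : Δ → ℕ} {σ : Type*}
    (Y : ∀ f : Δ, List (σ ⊕ Fin (ar f))) (hY : Projective Y)
    (f : Δ) (ts : Fin (ar f) → PTerm Δ ar) :
    ((PTerm.node f ts).yield Y).length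
      ≤ (Y f).length + ∑ i, ((ts i).yield Y).length := by
  have h2 := aux_sum_le (fun i => ((ts i).yield Y).length) (Y f)
  rw [hY f] at h2
  have h3 : ((List.ofFn (fun i : Fin (ar f) => i)).map
      (fun i => ((ts i).yield Y).length)).sum = ∑ i, ((ts i).yield Y).length := by
    simp [List.map_ofFn, List.sum_ofFn]
  rw [h3] at h2
  refine le_trans (le_of_eq ?_) h2
  simp only [PTerm.yield]
  rw [List.length_flatMap]
  congr 1
  apply List.map_congr_left
  intro s _
  cases s <;> simp

/-- For every `r` there is `s > r` such that every term whose yield is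
longer than `2s` has a strict subtree whose yield has length at least `2r`. -/
theorem statement1 {Δ : Type*} [Fintype Δ] {ar : Δ → ℕ} {σ : Type*}
    (Y : ∀ f : Δ, List (σ ⊕ Fin (ar f))) (hY : Projective Y) (r : ℕ) :
    ∃ s : ℕ, r < s ∧ ∀ t : PTerm Δ ar, 2 * s < (t.yield Y).length →
      ∃ t' : PTerm Δ ar, StrictSubtree t' t ∧ 2 * r ≤ (t'.yield Y).length := by
  classical
  set M : ℕ := Finset.univ.sup fun f : Δ => (Y f).length with hM
  set K : ℕ := Finset.univ.sup ar with hK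
  refine ⟨M + 2 * K * r + r + 1, by omega, ?_⟩
  intro t ht
  obtain ⟨f, ts⟩ := t
  have hlen := yield_len_le Y hY f ts
  set mc : ℕ := Finset.univ.sup fun i : Fin (ar f) => ((ts i).yield Y).length with hmc
  have hmcle : ∀ i : Fin (ar f), ((ts i).yield Y).length ≤ mc := fun i =>
    Finset.le_sup (f := fun i : Fin (ar f) => ((ts i).yield Y).length)
      (Finset.mem_univ i)
  have hsum : ∑ i, ((ts i).yield Y).length ≤ ar f * mc := by
    calc ∑ i, ((ts i).yield Y).length ≤ ∑ _i : Fin (ar f), mc :=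
          Finset.sum_le_sum fun i _ => hmcle i
      _ = ar f * mc := by simp [mul_comm]
  have hMf : (Y f).length ≤ M :=
    Finset.le_sup (f := fun f : Δ => (Y f).length) (Finset.mem_univ f)
  have hKf : ar f ≤ K := Finset.le_sup (f := ar) (Finset.mem_univ f)
  have hmc2r : 2 * r < mc := by nlinarith [Nat.mul_le_mul hKf (le_refl mc)]
  have hpos : 0 < ar f := by
    by_contra h0
    have h0' : ar f = 0 := by omega
    have : mc = 0 := by
      rw [hmc]
      have he : (Finset.univ : Finset (Fin (ar f))) = ∅ := by
        apply Finset.univ_eq_empty_iff.mpr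
        rw [h0']; exact Fin.isEmpty'
      simp [he]
    omega
  obtain ⟨i, _, hi⟩ := Finset.exists_mem_eq_sup Finset.univ
    ⟨⟨0, hpos⟩, Finset.mem_univ _⟩
    fun i : Fin (ar f) => ((ts i).yield Y).length
  refine ⟨ts i, ⟨f, ts, i, rfl, Subtree.refl _⟩, ?_⟩
  have hmi : mc = ((ts i).yield Y).length := hi
  omega
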